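/- Let k > 0 and R₀ ∈ (0, π/√k), and define R : ℝ → ℝ by R(t) = (2/√k)·arccos(exp(−k·t/2)·cos(√k·R₀/2)). Then R(0) = R₀ and, for every t > 0, R is differentiable at t with derivative R'(t) = √k · cot(√k·R(t)/2). (This is the deterministic distance process of the perverse coupling of Brownian motions on a surface of constant curvature k > 0: dR_t = √k cot(√k R_t/2) dt.) -/

import Mathlib

open Real

/-! Write `R = (2/√k) θ` with `θ = arccos f` and `f(t) = e^{-kt/2} cos (√k R₀/2)`. Since
`f' = -(k/2) f` and `cot (arccos x) = x / √(1 - x²)`, the chain rule gives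
`θ' = (k/2) f / √(1 - f²) = (k/2) cot θ`; multiplying by `2/√k` and using `θ = √k R / 2`
yields `R' = √k cot (√k R / 2)`. -/

/-- Outside `[-1, 1]` both sides are the junk value `0`. -/
theorem Real.cot_arccos (x : ℝ) : cot (arccos x) = x / √(1 - x ^ 2) := by
  rw [cot_eq_cos_div_sin, sin_arccos]
  rcases eq_or_ne √(1 - x ^ 2) 0 with h | h
  · simp [h]
  · have hx : 0 < 1 - x ^ 2 := sqrt_ne_zero'.mp h
    rw [cos_arccos (by nlinarith) (by nlinarith)]

theorem HasDerivAt.arccos_of_hasDerivAt_neg_mul_self {f : ℝ → ℝ} {a t : ℝ}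
    (hf : HasDerivAt f (-a * f t) t) (h₁ : f t ≠ -1) (h₂ : f t ≠ 1) :
    HasDerivAt (fun u => arccos (f u)) (a * cot (arccos (f t))) t := by
  refine ((hasDerivAt_arccos h₁ h₂).comp t hf).congr_deriv ?_
  rw [cot_arccos]
  ring

theorem hasDerivAt_arccos_exp_mul_const (k c t : ℝ) (hc : |c| ≤ 1) (ht : 0 < k * t) :
    HasDerivAt (fun u => arccos (exp (-(k * u) / 2) * c))
      (k / 2 * cot (arccos (exp (-(k * t) / 2) * c))) t := by
  have hexp : exp (-(k * t) / 2) < 1 := Real.exp_lt_one_iff.mpr (by linarith)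
  have hx : |exp (-(k * t) / 2) * c| < 1 := by
    rw [abs_mul, abs_of_pos (exp_pos _)]
    nlinarith [abs_nonneg c, exp_pos (-(k * t) / 2)]
  have hf : HasDerivAt (fun u => exp (-(k * u) / 2) * c)
      (-(k / 2) * (exp (-(k * t) / 2) * c)) t := by
    have hlin : HasDerivAt (fun u => -(k * u) / 2) (-(k / 2)) t := by
      simpa [neg_div] using ((hasDerivAt_id t).const_mul k).neg.div_const 2
    exact (hlin.exp.mul_const c).congr_deriv (by ring)
  exact hf.arccos_of_hasDerivAt_neg_mul_self (abs_lt.mp hx).1.ne' (abs_lt.mp hx).2.ne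

theorem perverse_coupling_distance (k R₀ : ℝ) (hk : 0 < k)
    (hR₀ : R₀ ∈ Set.Ioo 0 (Real.pi / Real.sqrt k)) (R : ℝ → ℝ)
    (hR : ∀ t, R t =
      2 / Real.sqrt k * Real.arccos (Real.exp (-(k * t) / 2) * Real.cos (Real.sqrt k * R₀ / 2))) :
    R 0 = R₀ ∧
      ∀ t > (0 : ℝ), HasDerivAt R (Real.sqrt k * Real.cot (Real.sqrt k * R t / 2)) t := by
  have hs : 0 < √k := sqrt_pos.mpr hk
  have hsR₀ : √k * R₀ < π := (lt_div_iff₀' hs).mp hR₀.2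
  have hR_half (t : ℝ) : √k * R t / 2 = arccos (exp (-(k * t) / 2) * cos (√k * R₀ / 2)) := by
    rw [hR]
    field_simp
  refine ⟨?_, fun t ht => ?_⟩
  · rw [hR, mul_zero, neg_zero, zero_div, exp_zero, one_mul,
      arccos_cos (by nlinarith [hR₀.1]) (by linarith [pi_pos])]
    field_simp
  · rw [hR_half, show R = _ from funext hR]
    refine ((hasDerivAt_arccos_exp_mul_const k _ t (abs_cos_le_one _)
      (mul_pos hk ht)).const_mul (2 / √k)).congr_deriv ?_
    rw [← mul_assoc, show 2 / √k * (k / 2) = √k by field_simp; rw [sq_sqrt hk.le]]
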